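/- arXiv:1510.01254 — 8 statements merged into one kernel-verified Lean document; each statement's English description precedes it below -/
import Mathlib

section
/- Let X and Y be real normed vector spaces, A : X → Y a homogeneous map, and Q a centrally symmetric subset of X. Fix N ≥ 0 and δ ≥ 0. Then for every bounded linear operator T : X → Y with operator norm ‖T‖ ≤ N one has sup_{x∈Q} ‖Ax − Tx‖ ≥ ω(δ) − N·δ; consequently the best approximation E(N) = inf{sup_{x∈Q}‖Ax − Tx‖ : T bounded linear, ‖T‖ ≤ N} satisfies E(N) ≥ sup_{δ≥0} (ω(δ) − N·δ). -/
open scoped ENNReal NNReal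

/-- **Stechkin's lower bound.** For a homogeneous map `A` and a centrally
symmetric class `Q`, every bounded linear operator `T` with `‖T‖ ≤ N` satisfies
`U(T) ≥ ω(δ) - N·δ`, and consequently `E(N) ≥ sup_{δ ≥ 0} (ω(δ) - N·δ)`.
All suprema/infima of families of norms are taken in `ℝ≥0∞`. -/
theorem stechkin_lower_bound
    {X Y : Type*} [NormedAddCommGroup X] [NormedSpace ℝ X]
    [NormedAddCommGroup Y] [NormedSpace ℝ Y]
    (A : X → Y) (hA : ∀ (c : ℝ) (x : X), A (c • x) = c • A x)
    (Q : Set X) (hQ : ∀ x ∈ Q, -x ∈ Q)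
    (N δ : ℝ) (hN : 0 ≤ N) (hδ : 0 ≤ δ) :
    (∀ T : X →L[ℝ] Y, ‖T‖ ≤ N →
      (⨆ x ∈ Q, ⨆ _ : ‖x‖ ≤ δ, (‖A x‖₊ : ℝ≥0∞)) - ENNReal.ofReal (N * δ)
        ≤ ⨆ x ∈ Q, (‖A x - T x‖₊ : ℝ≥0∞)) ∧
    (⨆ δ' : ℝ, ⨆ _ : 0 ≤ δ',
        ((⨆ x ∈ Q, ⨆ _ : ‖x‖ ≤ δ', (‖A x‖₊ : ℝ≥0∞)) - ENNReal.ofReal (N * δ')))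
      ≤ ⨅ T : {T : X →L[ℝ] Y // ‖T‖ ≤ N},
          ⨆ x ∈ Q, (‖A x - (T : X →L[ℝ] Y) x‖₊ : ℝ≥0∞) := by
  have key : ∀ δ' : ℝ, 0 ≤ δ' → ∀ T : X →L[ℝ] Y, ‖T‖ ≤ N →
      (⨆ x ∈ Q, ⨆ _ : ‖x‖ ≤ δ', (‖A x‖₊ : ℝ≥0∞)) - ENNReal.ofReal (N * δ')
        ≤ ⨆ x ∈ Q, (‖A x - T x‖₊ : ℝ≥0∞) := by
    intro δ' hδ' T hT
    rw [tsub_le_iff_right]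
    refine iSup₂_le fun x hx => iSup_le fun hxδ => ?_
    calc (‖A x‖₊ : ℝ≥0∞) ≤ (‖A x - T x‖₊ : ℝ≥0∞) + ENNReal.ofReal (N * δ') := by
          rw [← ENNReal.ofReal_coe_nnreal, ← ENNReal.ofReal_coe_nnreal,
            ← ENNReal.ofReal_add (by positivity) (by positivity)]
          refine ENNReal.ofReal_le_ofReal ?_
          simp only [coe_nnnorm]
          calc ‖A x‖ = ‖(A x - T x) + T x‖ := by congr 1; abel
            _ ≤ ‖A x - T x‖ + ‖T x‖ := norm_add_le _ _
            _ ≤ ‖A x - T x‖ + N * δ' := by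
                gcongr
                calc ‖T x‖ ≤ ‖T‖ * ‖x‖ := T.le_opNorm x
                  _ ≤ N * δ' := mul_le_mul hT hxδ (norm_nonneg x) hN
      _ ≤ (⨆ x ∈ Q, (‖A x - T x‖₊ : ℝ≥0∞)) + ENNReal.ofReal (N * δ') := by
          gcongr
          exact le_iSup₂ (f := fun x (_ : x ∈ Q) => (‖A x - T x‖₊ : ℝ≥0∞)) x hx
  refine ⟨fun T hT => key δ hδ T hT, ?_⟩
  refine le_iInf fun T => iSup_le fun δ' => iSup_le fun hδ' => key δ' hδ' T.1 T.2
end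

section
/- Let X and Y be real normed vector spaces, A : X → Y a map, Q a nonempty subset of X, and δ > 0. If T : X → Y is a linear map (not assumed continuous) such that U_δ(T) = sup{‖Ax − Tη‖ : x ∈ Q, η ∈ X, ‖x − η‖ ≤ δ} is finite, then T is a bounded (continuous) linear operator. Consequently, the optimal recovery error over all linear maps equals the optimal recovery error over all bounded linear operators: inf{U_δ(T) : T linear} = inf{U_δ(T) : T bounded linear}. -/
/-!
A linear map `T` with finite recovery error is bounded on the ball of radius `δ` around a point
`x₀ ∈ Q`: for `‖x₀ - η‖ ≤ δ`, `T η` lies within `U_δ(T)` of `A x₀`. An additive map into a real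
normed space that is bounded on some neighbourhood is continuous, since `T v = T (x₀ + v) - T x₀`
moves the bound to a neighbourhood of `0`. Linear maps of infinite recovery error do not affect
the infimum, so it may be taken over bounded operators only.
-/

open scoped ENNReal NNReal

open Set Bornology Metric Topology

lemma AddMonoidHom.continuous_of_isBounded_nhds {G H : Type*} [SeminormedAddCommGroup G]
    [SeminormedAddCommGroup H] [NormedSpace ℝ H] (f : G →+ H) {s : Set G} {x : G}
    (hs : s ∈ 𝓝 x) (hbounded : IsBounded (f '' s)) : Continuous f := by
  refine f.continuous_of_isBounded_nhds_zero (s := (x + ·) ⁻¹' s) ?_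
    ((hbounded.sub hbounded).subset ?_)
  · exact (continuous_const_add x).continuousAt.preimage_mem_nhds (by simpa using hs)
  · rintro _ ⟨v, hv, rfl⟩
    exact ⟨f (x + v), mem_image_of_mem f hv, f x, mem_image_of_mem f (mem_of_mem_nhds hs),
      by simp⟩

section RecoveryError

variable {X Y : Type*} [SeminormedAddCommGroup X] [SeminormedAddCommGroup Y]

/-- The paper's `U_δ(T)`, valued in `ℝ≥0∞` so that it may be infinite. -/
noncomputable def recoveryError (A : X → Y) (Q : Set X) (δ : ℝ) (T : X → Y) : ℝ≥0∞ :=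
  ⨆ x ∈ Q, ⨆ η : X, ⨆ _ : ‖x - η‖ ≤ δ, (‖A x - T η‖₊ : ℝ≥0∞)

variable {A : X → Y} {Q : Set X} {δ : ℝ} {T : X → Y}

lemma nnnorm_sub_le_recoveryError {x η : X} (hx : x ∈ Q) (hη : ‖x - η‖ ≤ δ) :
    (‖A x - T η‖₊ : ℝ≥0∞) ≤ recoveryError A Q δ T :=
  le_iSup₂_of_le x hx <| le_iSup₂_of_le (f := fun η (_ : ‖x - η‖ ≤ δ) => _) η hη le_rfl

lemma isBounded_image_closedBall_of_recoveryError_ne_top {x : X} (hx : x ∈ Q)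
    (hT : recoveryError A Q δ T ≠ ⊤) : IsBounded (T '' closedBall x δ) := by
  refine (isBounded_closedBall (x := A x) (r := (recoveryError A Q δ T).toReal)).subset ?_
  rintro _ ⟨η, hη, rfl⟩
  rw [mem_closedBall', dist_eq_norm] at hη ⊢
  simpa using ENNReal.toReal_mono hT (nnnorm_sub_le_recoveryError hx hη)

variable [Module ℝ X] [NormedSpace ℝ Y]

lemma LinearMap.continuous_of_recoveryError_ne_top (hQ : Q.Nonempty) (hδ : 0 < δ)
    (T : X →ₗ[ℝ] Y) (hT : recoveryError A Q δ T ≠ ⊤) : Continuous T :=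
  let ⟨_, hx⟩ := hQ
  T.toAddMonoidHom.continuous_of_isBounded_nhds (closedBall_mem_nhds _ hδ)
    (isBounded_image_closedBall_of_recoveryError_ne_top hx hT)

lemma iInf_recoveryError_linearMap_eq_continuousLinearMap (hQ : Q.Nonempty) (hδ : 0 < δ) :
    ⨅ T : X →ₗ[ℝ] Y, recoveryError A Q δ T = ⨅ T : X →L[ℝ] Y, recoveryError A Q δ T := by
  refine le_antisymm (le_iInf fun S => ?_) (le_iInf fun T => ?_)
  · exact iInf_le (fun T : X →ₗ[ℝ] Y => recoveryError A Q δ T) S.toLinearMap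
  · rcases eq_or_ne (recoveryError A Q δ T) ⊤ with hT | hT
    · exact hT ▸ le_top
    · exact iInf_le (fun T : X →L[ℝ] Y => recoveryError A Q δ T)
        ⟨T, T.continuous_of_recoveryError_ne_top hQ hδ hT⟩

end RecoveryError

/-- If `Q` is nonempty, `δ > 0`, and a linear map `T` has finite recovery error
`U_δ(T)`, then `T` is continuous (bounded); consequently the optimal recovery
error over all linear maps equals the optimal recovery error over all bounded
linear operators. All suprema/infima of families of norms are taken in `ℝ≥0∞`. -/
theorem optimal_recovery_linear_eq_bounded
    {X Y : Type*} [NormedAddCommGroup X] [NormedSpace ℝ X]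
    [NormedAddCommGroup Y] [NormedSpace ℝ Y]
    (A : X → Y) (Q : Set X) (hQ : Q.Nonempty) (δ : ℝ) (hδ : 0 < δ) :
    (∀ T : X →ₗ[ℝ] Y,
      (⨆ x ∈ Q, ⨆ η : X, ⨆ _ : ‖x - η‖ ≤ δ, (‖A x - T η‖₊ : ℝ≥0∞)) ≠ ⊤ →
        Continuous T) ∧
    (⨅ T : X →ₗ[ℝ] Y,
        ⨆ x ∈ Q, ⨆ η : X, ⨆ _ : ‖x - η‖ ≤ δ, (‖A x - T η‖₊ : ℝ≥0∞))
      = ⨅ T : X →L[ℝ] Y,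
          ⨆ x ∈ Q, ⨆ η : X, ⨆ _ : ‖x - η‖ ≤ δ, (‖A x - T η‖₊ : ℝ≥0∞) :=
  ⟨fun T => T.continuous_of_recoveryError_ne_top hQ hδ,
    iInf_recoveryError_linearMap_eq_continuousLinearMap hQ hδ⟩
end

section
/- Let H be a complex Hilbert space, A a bounded self-adjoint linear operator on H, and φ, ψ : ℝ → ℂ continuous functions. Let F : ℝ → ℝ be concave and monotone increasing on [0,∞) with F(0) = 0, such that |φ(t)|² = F(|ψ(t)|²) for all t ∈ ℝ. Then for every x ∈ H with x ≠ 0, ‖φ(A)x‖² ≤ ‖x‖² · F( ‖ψ(A)x‖² / ‖x‖² ). -/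
/-!
Since `‖g(A)x‖² = ⟪|g|²(A)x, x⟫`, the inequality is Jensen's inequality for the spectral measure
of `x`, but supporting lines suffice: if `F s ≤ F m + c (s - m)` on `[0, ∞)`
at `m = ‖ψ(A)x‖² / ‖x‖²`, then `|φ|² ≤ F m - c m + c |ψ|²` on the spectrum, and the functional
calculus is monotone. At `m = 0` there may be no supporting line (`F = √·`), but then
`ψ(A)x = 0`; as `φ` vanishes on the zeros of `ψ`, compactness of the spectrum gives
`|φ|² ≤ ε + C |ψ|²` there for every `ε > 0`, which forces `φ(A)x = 0`.
-/

open Set Filter Topology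

lemma ConcaveOn.le_add_rightDeriv_mul_sub {S : Set ℝ} {f : ℝ → ℝ} {m y : ℝ}
    (hf : ConcaveOn ℝ S f) (hm : m ∈ interior S) (hy : y ∈ S) :
    f y ≤ f m + derivWithin f (Ioi m) m * (y - m) := by
  have hdiff_right : DifferentiableWithinAt ℝ f (Ioi m) m := by
    simpa using (hf.neg.differentiableWithinAt_Ioi_of_mem_interior hm).neg
  rcases lt_trichotomy y m with hym | rfl | hmy
  · have hdiff_left : DifferentiableWithinAt ℝ f (Iio m) m := by
      simpa using (hf.neg.differentiableWithinAt_Iio_of_mem_interior hm).neg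
    have hright_le_left : derivWithin f (Ioi m) m ≤ derivWithin f (Iio m) m := by
      simpa [derivWithin.neg] using hf.neg.leftDeriv_le_rightDeriv_of_mem_interior hm
    have hleft := hf.leftDeriv_le_slope hy (interior_subset hm) hym hdiff_left
    rw [slope_def_field, le_div_iff₀ (sub_pos.2 hym)] at hleft
    nlinarith
  · simp
  · have hright := hf.slope_le_rightDeriv (interior_subset hm) hy hmy hdiff_right
    rw [slope_def_field, div_le_iff₀ (sub_pos.2 hmy)] at hright
    linarith

lemma IsCompact.exists_forall_le_add_mul {X : Type*} [TopologicalSpace X] {K : Set X}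
    (hK : IsCompact K) {q g : X → ℝ} (hq : Continuous q) (hg : Continuous g)
    (hg_nonneg : ∀ t ∈ K, 0 ≤ g t) (hq_of_eq_zero : ∀ t ∈ K, g t = 0 → q t ≤ 0)
    {ε : ℝ} (hε : 0 < ε) :
    ∃ C, ∀ t ∈ K, q t ≤ ε + C * g t := by
  set V := K ∩ q ⁻¹' Ici ε
  have hg_pos : ∀ t ∈ V, 0 < g t := fun t ht =>
    (hg_nonneg t ht.1).lt_of_ne' fun h => by
      linarith [hq_of_eq_zero t ht.1 h, show ε ≤ q t from ht.2]
  obtain ⟨C, hC⟩ := (hK.inter_right (isClosed_Ici.preimage hq)).bddAbove_image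
    (hq.continuousOn.div hg.continuousOn fun t ht => (hg_pos t ht).ne')
  refine ⟨max C 0, fun t ht => ?_⟩
  have hCg : 0 ≤ max C 0 * g t := mul_nonneg (le_max_right _ _) (hg_nonneg t ht)
  by_cases htV : ε ≤ q t
  · have hqg : q t / g t ≤ max C 0 := (hC ⟨t, ⟨ht, htV⟩, rfl⟩).trans (le_max_left _ _)
    rw [div_le_iff₀ (hg_pos t ⟨ht, htV⟩)] at hqg
    linarith
  · linarith [not_le.1 htV]

lemma ContinuousLinearMap.reApplyInnerSelf_mono {𝕜 E : Type*} [RCLike 𝕜] [NormedAddCommGroup E]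
    [InnerProductSpace 𝕜 E] {S T : E →L[𝕜] E} (hST : S ≤ T) (x : E) :
    S.reApplyInnerSelf x ≤ T.reApplyInnerSelf x := by
  have := ((ContinuousLinearMap.le_def S T).1 hST).2 x
  simp only [ContinuousLinearMap.reApplyInnerSelf_apply, sub_apply, inner_sub_left,
    map_sub] at this ⊢
  linarith

section

variable {H : Type*} [NormedAddCommGroup H] [InnerProductSpace ℂ H] [CompleteSpace H]
  {A : H →L[ℂ] H}

lemma reApplyInnerSelf_cfc_le_affine (hA : IsSelfAdjoint A) {p r : ℝ → ℝ}
    (hp : ContinuousOn p (spectrum ℝ A)) (hr : ContinuousOn r (spectrum ℝ A)) {a c : ℝ}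
    (h : ∀ t ∈ spectrum ℝ A, p t ≤ a + c * r t) (x : H) :
    (cfc p A).reApplyInnerSelf x ≤ a * ‖x‖ ^ 2 + c * (cfc r A).reApplyInnerSelf x := by
  have haffine : cfc (fun t => a + c * r t) A = algebraMap ℝ (H →L[ℂ] H) a + c • cfc r A := by
    rw [cfc_const_add a (fun t => c * r t) A (by fun_prop) hA, cfc_const_mul c r A hr]
  calc (cfc p A).reApplyInnerSelf x
      ≤ (cfc (fun t => a + c * r t) A).reApplyInnerSelf x :=
        ContinuousLinearMap.reApplyInnerSelf_mono (cfc_mono h hp (by fun_prop)) x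
    _ = a * ‖x‖ ^ 2 + c * (cfc r A).reApplyInnerSelf x := by
        rw [haffine]
        simp [ContinuousLinearMap.reApplyInnerSelf_apply, Algebra.algebraMap_eq_smul_one,
          inner_add_left, inner_smul_left_eq_smul, ← Complex.ofReal_pow]

lemma norm_cfc_re_apply_sq (hA : IsSelfAdjoint A) {u : ℝ → ℂ} (hu : Continuous u) (x : H) :
    ‖cfc (fun z : ℂ => u z.re) A x‖ ^ 2 = (cfc (fun t => ‖u t‖ ^ 2) A).reApplyInnerSelf x := by
  set U := cfc (fun z : ℂ => u z.re) A
  have hsq : cfc (fun t => ‖u t‖ ^ 2) A = star U * U := by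
    rw [cfc_real_eq_complex (fun t => ‖u t‖ ^ 2) hA, ← cfc_star, ← cfc_mul _ _ A]
    refine cfc_congr fun z _ => ?_
    rw [RCLike.star_def, RCLike.conj_mul]
    norm_cast
  rw [hsq, ContinuousLinearMap.reApplyInnerSelf_apply, mul_apply_eq_comp,
    ContinuousLinearMap.star_eq_adjoint, ContinuousLinearMap.adjoint_inner_left,
    inner_self_eq_norm_sq]

lemma cfc_re_apply_eq_zero_of_cfc_re_apply_eq_zero (hA : IsSelfAdjoint A) {φ ψ : ℝ → ℂ}
    (hφ : Continuous φ) (hψ : Continuous ψ) (hφψ : ∀ t ∈ spectrum ℝ A, ψ t = 0 → φ t = 0)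
    {x : H} (hψx : cfc (fun z : ℂ => ψ z.re) A x = 0) :
    cfc (fun z : ℂ => φ z.re) A x = 0 := by
  have hsmall : ∀ ε > 0, ‖cfc (fun z : ℂ => φ z.re) A x‖ ^ 2 ≤ ε * ‖x‖ ^ 2 := by
    intro ε hε
    obtain ⟨C, hC⟩ := (spectrum.isCompact (𝕜 := ℝ) A).exists_forall_le_add_mul
      (q := fun t => ‖φ t‖ ^ 2) (g := fun t => ‖ψ t‖ ^ 2) (by fun_prop) (by fun_prop)
      (fun t _ => by positivity) (fun t ht h => by simp [hφψ t ht (by simpa using h)]) hε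
    have := reApplyInnerSelf_cfc_le_affine hA (by fun_prop) (by fun_prop) hC x
    rwa [← norm_cfc_re_apply_sq hA hφ, ← norm_cfc_re_apply_sq hA hψ, hψx, norm_zero,
      zero_pow two_ne_zero, mul_zero, add_zero] at this
  have hlim : Tendsto (fun ε : ℝ => ε * ‖x‖ ^ 2) (𝓝[>] 0) (𝓝 0) := by
    simpa using ((continuous_mul_const (‖x‖ ^ 2)).tendsto 0).mono_left nhdsWithin_le_nhds
  have hnonpos := ge_of_tendsto hlim (eventually_nhdsWithin_of_forall hsmall)
  simpa using le_antisymm hnonpos (sq_nonneg _)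

end

theorem hlp_multiplicative_for_operator_functions_general
    {H : Type*} [NormedAddCommGroup H] [InnerProductSpace ℂ H] [CompleteSpace H]
    (A : H →L[ℂ] H) (hA : IsSelfAdjoint A)
    (φ ψ : ℝ → ℂ) (hφ : Continuous φ) (hψ : Continuous ψ)
    (F : ℝ → ℝ) (hFconc : ConcaveOn ℝ (Set.Ici 0) F)
    (hF0 : F 0 = 0)
    (hFφψ : ∀ t : ℝ, ‖φ t‖ ^ 2 = F (‖ψ t‖ ^ 2))
    (x : H) :
    ‖cfc (fun z : ℂ => φ z.re) A x‖ ^ 2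
      ≤ ‖x‖ ^ 2 * F (‖cfc (fun z : ℂ => ψ z.re) A x‖ ^ 2 / ‖x‖ ^ 2) := by
  obtain rfl | hx := eq_or_ne x 0
  · simp
  obtain hψx | hψx := eq_or_ne (cfc (fun z : ℂ => ψ z.re) A x) 0
  · have hφx := cfc_re_apply_eq_zero_of_cfc_re_apply_eq_zero hA hφ hψ
      (fun t _ ht => by simpa [ht, hF0] using hFφψ t) hψx
    simp [hφx, hψx, hF0]
  set m := ‖cfc (fun z : ℂ => ψ z.re) A x‖ ^ 2 / ‖x‖ ^ 2 with hm_def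
  have hm : m ∈ interior (Ici 0) := by rw [interior_Ici, mem_Ioi, hm_def]; positivity
  set c := derivWithin F (Ioi m) m
  have htangent : ∀ t ∈ spectrum ℝ A, ‖φ t‖ ^ 2 ≤ (F m - c * m) + c * ‖ψ t‖ ^ 2 := by
    intro t _
    linarith [hFφψ t, hFconc.le_add_rightDeriv_mul_sub hm (sq_nonneg ‖ψ t‖)]
  calc ‖cfc (fun z : ℂ => φ z.re) A x‖ ^ 2
      ≤ (F m - c * m) * ‖x‖ ^ 2 + c * ‖cfc (fun z : ℂ => ψ z.re) A x‖ ^ 2 := by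
        rw [norm_cfc_re_apply_sq hA hφ, norm_cfc_re_apply_sq hA hψ]
        exact reApplyInnerSelf_cfc_le_affine hA (by fun_prop) (by fun_prop) htangent x
    _ = ‖x‖ ^ 2 * F m := by
        rw [hm_def]
        field_simp
        ring

/-- **Multiplicative Hardy–Littlewood–Pólya type inequality for functions of a
self-adjoint operator.** Here `g(A)` is encoded by applying the continuous
functional calculus of the self-adjoint operator `A` to `z ↦ g(Re z)` (which
agrees with `g` on the real spectrum of `A`). If `|φ(t)|² = F(|ψ(t)|²)` with
`F` concave, monotone increasing on `[0,∞)` and `F(0) = 0`, then for `x ≠ 0`,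
`‖φ(A)x‖² ≤ ‖x‖² · F(‖ψ(A)x‖² / ‖x‖²)`. -/
theorem hlp_multiplicative_for_operator_functions
    {H : Type*} [NormedAddCommGroup H] [InnerProductSpace ℂ H] [CompleteSpace H]
    (A : H →L[ℂ] H) (hA : IsSelfAdjoint A)
    (φ ψ : ℝ → ℂ) (hφ : Continuous φ) (hψ : Continuous ψ)
    (F : ℝ → ℝ) (hFconc : ConcaveOn ℝ (Set.Ici 0) F)
    (hFmono : MonotoneOn F (Set.Ici 0)) (hF0 : F 0 = 0)
    (hFφψ : ∀ t : ℝ, ‖φ t‖ ^ 2 = F (‖ψ t‖ ^ 2))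
    (x : H) (hx : x ≠ 0) :
    ‖cfc (fun z : ℂ => φ z.re) A x‖ ^ 2
      ≤ ‖x‖ ^ 2 * F (‖cfc (fun z : ℂ => ψ z.re) A x‖ ^ 2 / ‖x‖ ^ 2) :=
  hlp_multiplicative_for_operator_functions_general A hA φ ψ hφ hψ F hFconc hF0 hFφψ x
end

section
/- Let φ, ψ : ℝ → ℂ be continuous even functions such that |φ| and |ψ| are strictly increasing on (0,∞) and t ↦ |φ(t)|/|ψ(t)| is non-increasing on (0,∞). Fix b > 0 and define φ_b(t) = φ(t) − (φ(b)/ψ(b))·ψ(t) for |t| ≤ b and φ_b(t) = 0 for |t| > b. Then for every t ≠ 0 one has |φ(t) − φ_b(t)| ≤ (|φ(b)|/|ψ(b)|)·|ψ(t)|, and moreover sup_{t≠0} |φ(t) − φ_b(t)|/|ψ(t)| = |φ(b)|/|ψ(b)| (the supremum is attained at t = b). -/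
/-- The truncation `φ_b(t) = φ(t) − (φ(b)/ψ(b))·ψ(t)` for `|t| ≤ b`, `0` otherwise. -/
noncomputable def phib (φ ψ : ℝ → ℂ) (b : ℝ) : ℝ → ℂ :=
  fun t => if |t| ≤ b then φ t - (φ b / ψ b) * ψ t else 0

/-- For even continuous `φ, ψ` with `|φ|, |ψ|` strictly increasing on `(0,∞)` and
`|φ|/|ψ|` non-increasing on `(0,∞)`, one has
`|φ(t) − φ_b(t)| ≤ (|φ(b)|/|ψ(b)|)·|ψ(t)|` for all `t ≠ 0`, and
`sup_{t ≠ 0} |φ(t) − φ_b(t)|/|ψ(t)| = |φ(b)|/|ψ(b)|`, attained (e.g. at `t = b`). -/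
theorem phib_deviation_bound_and_sup
    (φ ψ : ℝ → ℂ) (hφc : Continuous φ) (hψc : Continuous ψ)
    (hφe : ∀ t : ℝ, φ (-t) = φ t) (hψe : ∀ t : ℝ, ψ (-t) = ψ t)
    (hφm : StrictMonoOn (fun t => ‖φ t‖) (Set.Ioi (0 : ℝ)))
    (hψm : StrictMonoOn (fun t => ‖ψ t‖) (Set.Ioi (0 : ℝ)))
    (hratio : AntitoneOn (fun t => ‖φ t‖ / ‖ψ t‖) (Set.Ioi (0 : ℝ)))
    (b : ℝ) (hb : 0 < b) :
    (∀ t : ℝ, t ≠ 0 → ‖φ t - phib φ ψ b t‖ ≤ (‖φ b‖ / ‖ψ b‖) * ‖ψ t‖) ∧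
    IsGreatest {r : ℝ | ∃ t : ℝ, t ≠ 0 ∧ r = ‖φ t - phib φ ψ b t‖ / ‖ψ t‖}
      (‖φ b‖ / ‖ψ b‖) := by
  have hbound : ∀ t : ℝ, t ≠ 0 → ‖φ t - phib φ ψ b t‖ ≤ (‖φ b‖ / ‖ψ b‖) * ‖ψ t‖ := by
    intro t ht
    unfold phib
    by_cases h : |t| ≤ b
    · simp only [if_pos h]
      have : φ t - (φ t - (φ b / ψ b) * ψ t) = (φ b / ψ b) * ψ t := by ring
      rw [this, norm_mul, norm_div]
    · simp only [if_neg h, sub_zero]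
      push_neg at h
      set s := |t| with hs
      have hsb : b < s := h
      have hφs : φ s = φ t := by
        rcases abs_cases t with ⟨h1, _⟩ | ⟨h1, _⟩
        · rw [hs, h1]
        · rw [hs, h1, hφe]
      have hψs : ψ s = ψ t := by
        rcases abs_cases t with ⟨h1, _⟩ | ⟨h1, _⟩
        · rw [hs, h1]
        · rw [hs, h1, hψe]
      have hbmem : b ∈ Set.Ioi (0 : ℝ) := hb
      have hsmem : s ∈ Set.Ioi (0 : ℝ) := lt_trans hb hsb
      have hψpos : 0 < ‖ψ s‖ :=
        lt_of_le_of_lt (norm_nonneg (ψ b)) (hψm hbmem hsmem hsb)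
      have hr : ‖φ s‖ / ‖ψ s‖ ≤ ‖φ b‖ / ‖ψ b‖ := hratio hbmem hsmem (le_of_lt hsb)
      rw [div_le_iff₀ hψpos] at hr
      rw [← hφs, ← hψs]
      exact hr
  refine ⟨hbound, ?_, ?_⟩
  · refine ⟨b, ne_of_gt hb, ?_⟩
    have habs : |b| ≤ b := le_of_eq (abs_of_pos hb)
    unfold phib
    simp only [if_pos habs]
    have : φ b - (φ b - (φ b / ψ b) * ψ b) = (φ b / ψ b) * ψ b := by ring
    rw [this, norm_mul, norm_div]
    rcases eq_or_ne ‖ψ b‖ 0 with h0 | h0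
    · simp [h0]
    · rw [div_mul_cancel₀ _ h0]
  · rintro r ⟨t, ht, rfl⟩
    have hb' := hbound t ht
    rcases eq_or_ne ‖ψ t‖ 0 with h0 | h0
    · rw [h0, div_zero]
      positivity
    · have hpos : 0 < ‖ψ t‖ := lt_of_le_of_ne (norm_nonneg _) (Ne.symm h0)
      rw [div_le_iff₀ hpos]
      exact hb'
end

section
/- Let H be a complex Hilbert space and A a bounded self-adjoint linear operator on H. Let φ, ψ : ℝ → ℂ be continuous even functions such that |φ| and |ψ| are strictly increasing on (0,∞) and |φ(t)|/|ψ(t)| is non-increasing on (0,∞). Fix b > 0 and let φ_b and N(b) be as defined. Then the operator norm of φ_b(A) is at most N(b), and for every x ∈ H one has ‖φ(A)x − φ_b(A)x‖ ≤ (|φ(b)|/|ψ(b)|)·‖ψ(A)x‖. In particular, sup{‖φ(A)x − φ_b(A)x‖ : x ∈ H, ‖ψ(A)x‖ ≤ 1} ≤ |φ(b)|/|ψ(b)|, so the best approximation of φ(A) on W^ψ = {x : ‖ψ(A)x‖ ≤ 1} by bounded operators of norm at most N(b) satisfies E(N(b)) ≤ |φ(b)|/|ψ(b)|. -/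
/-!
Away from `[-b, b]` the deviation `φ - φ_b` is `φ` itself, and on `[-b, b]` it is
`(φ(b)/ψ(b))·ψ`; both cases read `φ - φ_b = r·ψ` with `r(t) = φ(s)/ψ(s)`, `s = max |t| b`.
Since `|ψ|` does not vanish on `[b, ∞)`, `r` is continuous, and since `|φ|/|ψ|` is
non-increasing, `|r| ≤ |φ(b)|/|ψ(b)|`. Hence `φ(A) - φ_b(A) = r(A) ψ(A)` with
`‖r(A)‖ ≤ |φ(b)|/|ψ(b)|`, which gives the pointwise bound. The same identity shows that
`φ_b` is continuous with compact support, so `N(b)` is finite and bounds `‖φ_b(A)‖`; the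
bound on `E(N(b))` follows by taking `T = φ_b(A)`.
-/

open scoped ENNReal NNReal

/-- `N(b) = sup_{t ∈ ℝ} |φ_b(t)|`. -/
noncomputable def Nb (φ ψ : ℝ → ℂ) (b : ℝ) : ℝ :=
  ⨆ t : ℝ, ‖phib φ ψ b t‖

open Set

lemma Function.Even.apply_abs {β : Type*} {f : ℝ → β} (hf : f.Even) (t : ℝ) : f |t| = f t := by
  rcases abs_choice t with h | h <;> simp only [h, hf.eq]

lemma norm_pos_of_strictMonoOn_norm {E : Type*} [NormedAddCommGroup E] {f : ℝ → E}
    (hf : StrictMonoOn (fun t => ‖f t‖) (Ioi 0)) {s : ℝ} (hs : 0 < s) : 0 < ‖f s‖ :=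
  (norm_nonneg _).trans_lt (hf (half_pos hs) hs (half_lt_self hs))

lemma norm_cfc_apply_le_of_eqOn_mul {E : Type*} [NormedAddCommGroup E] [InnerProductSpace ℂ E]
    [CompleteSpace E] {A : E →L[ℂ] E} {f g h : ℂ → ℂ} {c : ℝ}
    (hfgh : (spectrum ℂ A).EqOn f (fun z => h z * g z))
    (hh : ContinuousOn h (spectrum ℂ A)) (hg : ContinuousOn g (spectrum ℂ A))
    (hc : 0 ≤ c) (hh_le : ∀ z ∈ spectrum ℂ A, ‖h z‖ ≤ c) (x : E) :
    ‖cfc f A x‖ ≤ c * ‖cfc g A x‖ := by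
  rw [cfc_congr hfgh, cfc_mul h g A]
  exact ((cfc h A).le_opNorm (cfc g A x)).trans
    (mul_le_mul_of_nonneg_right (norm_cfc_le hc hh_le) (norm_nonneg _))

lemma iSup_nnnorm_le_ofReal_of_norm_le_mul {α E F : Type*} [SeminormedAddCommGroup E]
    [SeminormedAddCommGroup F] {u : α → E} {v : α → F} {c : ℝ} (hc : 0 ≤ c)
    (huv : ∀ x, ‖u x‖ ≤ c * ‖v x‖) :
    ⨆ x : {x // ‖v x‖ ≤ 1}, (‖u x‖₊ : ℝ≥0∞) ≤ ENNReal.ofReal c := by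
  refine iSup_le fun x => ?_
  rw [← ENNReal.ofReal_coe_nnreal, coe_nnnorm]
  exact ENNReal.ofReal_le_ofReal ((huv x).trans (mul_le_of_le_one_right hc x.2))

noncomputable def clampedRatio (φ ψ : ℝ → ℂ) (b t : ℝ) : ℂ :=
  φ (max |t| b) / ψ (max |t| b)

section
variable {φ ψ : ℝ → ℂ} {b : ℝ}

lemma continuous_clampedRatio (hφ : Continuous φ) (hψ : Continuous ψ)
    (hψ_ne : ∀ s, b ≤ s → ψ s ≠ 0) : Continuous (clampedRatio φ ψ b) := by
  have hmax : Continuous fun t : ℝ => max |t| b := continuous_abs.max continuous_const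
  exact (hφ.comp hmax).div (hψ.comp hmax) fun t => hψ_ne _ (le_max_right _ _)

lemma norm_clampedRatio_le (hratio : AntitoneOn (fun t => ‖φ t‖ / ‖ψ t‖) (Ioi 0)) (hb : 0 < b)
    (t : ℝ) : ‖clampedRatio φ ψ b t‖ ≤ ‖φ b‖ / ‖ψ b‖ := by
  rw [clampedRatio, norm_div]
  exact hratio hb (lt_max_of_lt_right hb) (le_max_right _ _)

lemma phib_eq_sub_clampedRatio_mul (hφe : φ.Even) (hψe : ψ.Even)
    (hψ_ne : ∀ s, b ≤ s → ψ s ≠ 0) : phib φ ψ b = φ - clampedRatio φ ψ b * ψ := by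
  funext t
  simp only [phib, clampedRatio, Pi.sub_apply, Pi.mul_apply]
  split_ifs with ht
  · rw [max_eq_right ht]
  · have hψt : ψ t ≠ 0 := hψe.apply_abs t ▸ hψ_ne |t| (not_le.mp ht).le
    rw [max_eq_left (not_le.mp ht).le, hφe.apply_abs, hψe.apply_abs, div_mul_cancel₀ _ hψt, sub_self]

lemma continuous_phib (hφ : Continuous φ) (hψ : Continuous ψ) (hφe : φ.Even) (hψe : ψ.Even)
    (hψ_ne : ∀ s, b ≤ s → ψ s ≠ 0) : Continuous (phib φ ψ b) := by
  rw [phib_eq_sub_clampedRatio_mul hφe hψe hψ_ne]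
  exact hφ.sub ((continuous_clampedRatio hφ hψ hψ_ne).mul hψ)

lemma hasCompactSupport_phib : HasCompactSupport (phib φ ψ b) :=
  HasCompactSupport.intro isCompact_Icc fun _ ht => if_neg fun h => ht (abs_le.mp h)

lemma norm_phib_le_Nb (hphib : Continuous (phib φ ψ b)) (t : ℝ) : ‖phib φ ψ b t‖ ≤ Nb φ ψ b :=
  le_ciSup (hphib.norm.bddAbove_range_of_hasCompactSupport hasCompactSupport_phib.norm) t

end

/-- `g(A)` is encoded as the continuous functional calculus of `A` applied to `z ↦ g(Re z)`. -/
theorem best_approx_by_bounded_upper_bound_general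
    {H : Type*} [NormedAddCommGroup H] [InnerProductSpace ℂ H] [CompleteSpace H]
    (A : H →L[ℂ] H)
    (φ ψ : ℝ → ℂ) (hφc : Continuous φ) (hψc : Continuous ψ)
    (hφe : ∀ t : ℝ, φ (-t) = φ t) (hψe : ∀ t : ℝ, ψ (-t) = ψ t)
    (hψm : StrictMonoOn (fun t => ‖ψ t‖) (Set.Ioi (0 : ℝ)))
    (hratio : AntitoneOn (fun t => ‖φ t‖ / ‖ψ t‖) (Set.Ioi (0 : ℝ)))
    (b : ℝ) (hb : 0 < b) :
    ‖cfc (fun z : ℂ => phib φ ψ b z.re) A‖ ≤ Nb φ ψ b ∧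
    (∀ x : H,
      ‖cfc (fun z : ℂ => φ z.re) A x - cfc (fun z : ℂ => phib φ ψ b z.re) A x‖
        ≤ (‖φ b‖ / ‖ψ b‖) * ‖cfc (fun z : ℂ => ψ z.re) A x‖) ∧
    (⨆ x : {x : H // ‖cfc (fun z : ℂ => ψ z.re) A x‖ ≤ 1},
        (‖cfc (fun z : ℂ => φ z.re) A (x : H)
            - cfc (fun z : ℂ => phib φ ψ b z.re) A (x : H)‖₊ : ℝ≥0∞))
      ≤ ENNReal.ofReal (‖φ b‖ / ‖ψ b‖) ∧
    (⨅ T : {T : H →L[ℂ] H // ‖T‖ ≤ Nb φ ψ b},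
        ⨆ x : {x : H // ‖cfc (fun z : ℂ => ψ z.re) A x‖ ≤ 1},
          (‖cfc (fun z : ℂ => φ z.re) A (x : H) - (T : H →L[ℂ] H) (x : H)‖₊ : ℝ≥0∞))
      ≤ ENNReal.ofReal (‖φ b‖ / ‖ψ b‖) := by
  have hψ_ne : ∀ s, b ≤ s → ψ s ≠ 0 := fun s hs =>
    norm_pos_iff.mp (norm_pos_of_strictMonoOn_norm hψm (hb.trans_le hs))
  have hphib := continuous_phib hφc hψc hφe hψe hψ_ne
  have hc : 0 ≤ ‖φ b‖ / ‖ψ b‖ := by positivity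
  have norm_le : ‖cfc (fun z : ℂ => phib φ ψ b z.re) A‖ ≤ Nb φ ψ b :=
    norm_cfc_le ((norm_nonneg _).trans (norm_phib_le_Nb hphib 0))
      fun z _ => norm_phib_le_Nb hphib z.re
  have dev_le : ∀ x : H,
      ‖cfc (fun z : ℂ => φ z.re) A x - cfc (fun z : ℂ => phib φ ψ b z.re) A x‖
        ≤ (‖φ b‖ / ‖ψ b‖) * ‖cfc (fun z : ℂ => ψ z.re) A x‖ := by
    intro x
    rw [← sub_apply, ← cfc_sub (fun z : ℂ => φ z.re) (fun z => phib φ ψ b z.re) A]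
    have hr := continuous_clampedRatio hφc hψc hψ_ne
    refine norm_cfc_apply_le_of_eqOn_mul (h := fun z => clampedRatio φ ψ b z.re) (fun z _ => ?_)
      (by fun_prop) (by fun_prop) hc (fun z _ => norm_clampedRatio_le hratio hb z.re) x
    simp [phib_eq_sub_clampedRatio_mul hφe hψe hψ_ne]
  have sup_le := iSup_nnnorm_le_ofReal_of_norm_le_mul hc dev_le
  exact ⟨norm_le, dev_le, sup_le, iInf_le_of_le ⟨_, norm_le⟩ sup_le⟩

/-- **Upper bound in the Stechkin problem for `φ(A)` on `W^ψ`.** Here `g(A)` is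
encoded via the continuous functional calculus of the self-adjoint operator `A`
applied to `z ↦ g(Re z)`. The operator `φ_b(A)` has norm at most `N(b)`, and
`‖φ(A)x − φ_b(A)x‖ ≤ (|φ(b)|/|ψ(b)|)·‖ψ(A)x‖` for all `x`; in particular the
deviation of `φ_b(A)` from `φ(A)` on `W^ψ` is at most `|φ(b)|/|ψ(b)|`, so
`E(N(b)) ≤ |φ(b)|/|ψ(b)|` (the infimum over bounded operators of norm `≤ N(b)`
of the deviation, taken in `ℝ≥0∞`). -/
theorem best_approx_by_bounded_upper_bound
    {H : Type*} [NormedAddCommGroup H] [InnerProductSpace ℂ H] [CompleteSpace H]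
    (A : H →L[ℂ] H) (hA : IsSelfAdjoint A)
    (φ ψ : ℝ → ℂ) (hφc : Continuous φ) (hψc : Continuous ψ)
    (hφe : ∀ t : ℝ, φ (-t) = φ t) (hψe : ∀ t : ℝ, ψ (-t) = ψ t)
    (hφm : StrictMonoOn (fun t => ‖φ t‖) (Set.Ioi (0 : ℝ)))
    (hψm : StrictMonoOn (fun t => ‖ψ t‖) (Set.Ioi (0 : ℝ)))
    (hratio : AntitoneOn (fun t => ‖φ t‖ / ‖ψ t‖) (Set.Ioi (0 : ℝ)))
    (b : ℝ) (hb : 0 < b) :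
    ‖cfc (fun z : ℂ => phib φ ψ b z.re) A‖ ≤ Nb φ ψ b ∧
    (∀ x : H,
      ‖cfc (fun z : ℂ => φ z.re) A x - cfc (fun z : ℂ => phib φ ψ b z.re) A x‖
        ≤ (‖φ b‖ / ‖ψ b‖) * ‖cfc (fun z : ℂ => ψ z.re) A x‖) ∧
    (⨆ x : {x : H // ‖cfc (fun z : ℂ => ψ z.re) A x‖ ≤ 1},
        (‖cfc (fun z : ℂ => φ z.re) A (x : H)
            - cfc (fun z : ℂ => phib φ ψ b z.re) A (x : H)‖₊ : ℝ≥0∞))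
      ≤ ENNReal.ofReal (‖φ b‖ / ‖ψ b‖) ∧
    (⨅ T : {T : H →L[ℂ] H // ‖T‖ ≤ Nb φ ψ b},
        ⨆ x : {x : H // ‖cfc (fun z : ℂ => ψ z.re) A x‖ ≤ 1},
          (‖cfc (fun z : ℂ => φ z.re) A (x : H) - (T : H →L[ℂ] H) (x : H)‖₊ : ℝ≥0∞))
      ≤ ENNReal.ofReal (‖φ b‖ / ‖ψ b‖) :=
  best_approx_by_bounded_upper_bound_general A φ ψ hφc hψc hφe hψe hψm hratio b hb
end

section
/- Let φ, ψ : ℝ → ℂ be continuous even functions such that |φ| and |ψ| are strictly increasing on (0,∞), |φ(t)| → +∞ as t → +∞, and |φ(t)|/|ψ(t)| → 0 as t → +∞. For b > 0 let φ_b and N(b) = sup_{t∈ℝ}|φ_b(t)| be as defined. Then for every M > 0 there exists b > 0 such that N(b) ≥ M. -/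
/-- If `|φ(t)| → +∞` and `|φ(t)|/|ψ(t)| → 0` as `t → +∞`, then for every
`M > 0` there exists `b > 0` with `N(b) ≥ M`. -/
theorem Nb_unbounded
    (φ ψ : ℝ → ℂ) (hφc : Continuous φ) (hψc : Continuous ψ)
    (hφe : ∀ t : ℝ, φ (-t) = φ t) (hψe : ∀ t : ℝ, ψ (-t) = ψ t)
    (hφm : StrictMonoOn (fun t => ‖φ t‖) (Set.Ioi (0 : ℝ)))
    (hψm : StrictMonoOn (fun t => ‖ψ t‖) (Set.Ioi (0 : ℝ)))
    (hratio : AntitoneOn (fun t => ‖φ t‖ / ‖ψ t‖) (Set.Ioi (0 : ℝ)))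
    (hφtop : Filter.Tendsto (fun t => ‖φ t‖) Filter.atTop Filter.atTop)
    (hratio0 : Filter.Tendsto (fun t => ‖φ t‖ / ‖ψ t‖) Filter.atTop (nhds 0)) :
    ∀ M : ℝ, 0 < M → ∃ b : ℝ, 0 < b ∧ M ≤ Nb φ ψ b := by
  intro M hM
  -- choose s with ‖φ s‖ ≥ M + 1
  obtain ⟨s₀, hs₀⟩ := (Filter.tendsto_atTop.mp hφtop (M + 1)).exists_forall_of_atTop
  set s : ℝ := max s₀ 1 with hs
  have hs1 : (1:ℝ) ≤ s := le_max_right _ _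
  have hspos : 0 < s := lt_of_lt_of_le one_pos hs1
  have hφs : M + 1 ≤ ‖φ s‖ := hs₀ s (le_max_left _ _)
  -- choose b ≥ s with small ratio
  have hden : (0:ℝ) < ‖ψ s‖ + 1 := by positivity
  have hev : ∀ᶠ t in Filter.atTop, ‖φ t‖ / ‖ψ t‖ ≤ 1 / (‖ψ s‖ + 1) := by
    have := hratio0.eventually (ge_mem_nhds (by positivity : (0:ℝ) < 1 / (‖ψ s‖ + 1)))
    exact this.mono fun t ht => ht
  obtain ⟨b, hbs, hb⟩ := (hev.and (Filter.eventually_ge_atTop s)).exists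
  refine ⟨b, lt_of_lt_of_le hspos hb, ?_⟩
  -- key pointwise lower bound at t = s
  have habs : |s| ≤ b := by rw [abs_of_pos hspos]; exact hb
  have hval : phib φ ψ b s = φ s - (φ b / ψ b) * ψ s := by
    simp [phib, habs]
  have hnormdiv : ‖φ b / ψ b * ψ s‖ ≤ 1 := by
    rw [norm_mul, norm_div]
    calc ‖φ b‖ / ‖ψ b‖ * ‖ψ s‖ ≤ 1 / (‖ψ s‖ + 1) * (‖ψ s‖ + 1) := by
          apply mul_le_mul hbs (by linarith) (norm_nonneg _) (by positivity)
      _ = 1 := by field_simp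
  have hlow : M ≤ ‖phib φ ψ b s‖ := by
    rw [hval]
    calc M = (M + 1) - 1 := by ring
      _ ≤ ‖φ s‖ - ‖φ b / ψ b * ψ s‖ := by
          apply sub_le_sub hφs hnormdiv
      _ ≤ ‖φ s - φ b / ψ b * ψ s‖ := norm_sub_norm_le _ _
  -- boundedness of the family
  have hcont : Continuous fun t => ‖φ t - (φ b / ψ b) * ψ t‖ :=
    (hφc.sub (continuous_const.mul hψc)).norm
  obtain ⟨C, hC⟩ := (isCompact_Icc (a := -b) (b := b)).exists_bound_of_continuousOn
    hcont.continuousOn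
  have hbdd : BddAbove (Set.range fun t => ‖phib φ ψ b t‖) := by
    refine ⟨max C 0, ?_⟩
    rintro x ⟨t, rfl⟩
    by_cases ht : |t| ≤ b
    · have htI : t ∈ Set.Icc (-b) b := abs_le.mp ht
      have := hC t htI
      simp only [phib, if_pos ht]
      calc ‖φ t - φ b / ψ b * ψ t‖ ≤ ‖‖φ t - φ b / ψ b * ψ t‖‖ := le_abs_self _
        _ ≤ C := this
        _ ≤ max C 0 := le_max_left _ _
    · simp [phib, ht]
  exact le_trans hlow (le_ciSup hbdd s)
end

section
/- Let φ, ψ : ℝ → ℂ be continuous even functions such that |φ| and |ψ| are strictly increasing on (0,∞), |φ(t)|/|ψ(t)| is non-increasing on (0,∞), ψ(0) = 0, and |ψ(t)| → +∞ as t → +∞. Let F : ℝ → ℝ satisfy |φ(t)|² = F(|ψ(t)|²) for all t ∈ ℝ. Then for every δ > 0 and every b > 0, δ·√(F(1/δ²)) ≤ |φ(b)|/|ψ(b)| + N(b)·δ; consequently δ·√(F(1/δ²)) ≤ inf_{b>0} { |φ(b)|/|ψ(b)| + N(b)·δ }. -/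
/-!
Choose `t₀ > 0` with `|ψ(t₀)| = 1/δ`; then `δ·√(F(1/δ²)) = δ·|φ(t₀)|`, and it suffices to show
`|φ(t₀)| ≤ (|φ(b)|/|ψ(b)|)·|ψ(t₀)| + N(b)`. For `t₀ > b` this is the monotonicity of the ratio
`|φ|/|ψ|`; for `t₀ ≤ b` it is the triangle inequality applied to
`φ(t₀) = φ_b(t₀) + (φ(b)/ψ(b))·ψ(t₀)`.
-/

lemma exists_pos_norm_eq_of_tendsto_atTop {E : Type*} [NormedAddCommGroup E] {f : ℝ → E}
    (hf : Continuous f) (hf0 : f 0 = 0)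
    (hftop : Filter.Tendsto (fun t => ‖f t‖) Filter.atTop Filter.atTop) {r : ℝ} (hr : 0 < r) :
    ∃ t, 0 < t ∧ ‖f t‖ = r := by
  obtain ⟨T, hTr, hT0⟩ :=
    ((hftop.eventually_ge_atTop r).and (Filter.eventually_ge_atTop (0 : ℝ))).exists
  have hr_mem : r ∈ Set.Icc ‖f 0‖ ‖f T‖ := by
    rw [hf0, norm_zero]
    exact ⟨hr.le, hTr⟩
  obtain ⟨t, ht, hft⟩ := intermediate_value_Icc hT0 hf.norm.continuousOn hr_mem
  refine ⟨t, ht.1.lt_of_ne ?_, hft⟩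
  rintro rfl
  simp only [hf0, norm_zero] at hft
  exact hr.ne hft

section Truncation

variable {φ ψ : ℝ → ℂ} {b : ℝ}

lemma bddAbove_range_norm_phib (hφ : Continuous φ) (hψ : Continuous ψ) :
    BddAbove (Set.range fun t => ‖phib φ ψ b t‖) := by
  obtain ⟨M, hM⟩ :=
    ((isCompact_Icc (a := -b) (b := b)).image (hφ.sub (continuous_const.mul hψ)).norm).bddAbove
  refine ⟨max M 0, ?_⟩
  rintro _ ⟨t, rfl⟩
  simp only [phib]
  split_ifs with ht
  · exact le_max_of_le_left (hM ⟨t, abs_le.mp ht, rfl⟩)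
  · simp

lemma Nb_nonneg : 0 ≤ Nb φ ψ b :=
  Real.iSup_nonneg fun _ => norm_nonneg _

lemma norm_le_mul_add_Nb_of_abs_le (hφ : Continuous φ) (hψ : Continuous ψ) {t : ℝ}
    (htb : |t| ≤ b) : ‖φ t‖ ≤ ‖φ b‖ / ‖ψ b‖ * ‖ψ t‖ + Nb φ ψ b := by
  have hphib : phib φ ψ b t = φ t - (φ b / ψ b) * ψ t := if_pos htb
  have hN : ‖phib φ ψ b t‖ ≤ Nb φ ψ b := le_ciSup (bddAbove_range_norm_phib hφ hψ) t
  calc ‖φ t‖ = ‖(φ b / ψ b) * ψ t + phib φ ψ b t‖ := by rw [hphib, add_sub_cancel]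
    _ ≤ ‖φ b‖ / ‖ψ b‖ * ‖ψ t‖ + ‖phib φ ψ b t‖ := by
      grw [norm_add_le, norm_mul, norm_div]
    _ ≤ ‖φ b‖ / ‖ψ b‖ * ‖ψ t‖ + Nb φ ψ b := by grw [hN]

lemma norm_le_mul_add_Nb (hφ : Continuous φ) (hψ : Continuous ψ)
    (hratio : AntitoneOn (fun t => ‖φ t‖ / ‖ψ t‖) (Set.Ioi 0)) (hb : 0 < b) {t : ℝ}
    (ht : 0 < t) (hψt : ψ t ≠ 0) : ‖φ t‖ ≤ ‖φ b‖ / ‖ψ b‖ * ‖ψ t‖ + Nb φ ψ b := by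
  rcases le_or_gt t b with htb | hbt
  · exact norm_le_mul_add_Nb_of_abs_le hφ hψ (by rwa [abs_of_pos ht])
  · have hr : ‖φ t‖ / ‖ψ t‖ ≤ ‖φ b‖ / ‖ψ b‖ := hratio hb ht hbt.le
    rw [div_le_iff₀ (norm_pos_iff.mpr hψt)] at hr
    linarith [Nb_nonneg (φ := φ) (ψ := ψ) (b := b)]

end Truncation

theorem modulus_lower_bnd_le_l_delta_general
    (φ ψ : ℝ → ℂ) (hφc : Continuous φ) (hψc : Continuous ψ)
    (hratio : AntitoneOn (fun t => ‖φ t‖ / ‖ψ t‖) (Set.Ioi (0 : ℝ)))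
    (hψ0 : ψ 0 = 0)
    (hψtop : Filter.Tendsto (fun t => ‖ψ t‖) Filter.atTop Filter.atTop)
    (F : ℝ → ℝ) (hFφψ : ∀ t : ℝ, ‖φ t‖ ^ 2 = F (‖ψ t‖ ^ 2)) :
    ∀ δ : ℝ, 0 < δ →
      (∀ b : ℝ, 0 < b →
        δ * Real.sqrt (F (1 / δ ^ 2)) ≤ ‖φ b‖ / ‖ψ b‖ + Nb φ ψ b * δ) ∧
      δ * Real.sqrt (F (1 / δ ^ 2))
        ≤ ⨅ b : {b : ℝ // 0 < b}, (‖φ (b : ℝ)‖ / ‖ψ (b : ℝ)‖ + Nb φ ψ (b : ℝ) * δ) := by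
  intro δ hδ
  obtain ⟨t₀, ht₀, hψt₀⟩ := exists_pos_norm_eq_of_tendsto_atTop hψc hψ0 hψtop (one_div_pos.2 hδ)
  have hψt₀_ne : ψ t₀ ≠ 0 := norm_ne_zero_iff.mp (by rw [hψt₀]; positivity)
  have hsqrt : Real.sqrt (F (1 / δ ^ 2)) = ‖φ t₀‖ := by
    rw [← one_div_pow, ← hψt₀, ← hFφψ, Real.sqrt_sq (norm_nonneg _)]
  have hbound : ∀ b : ℝ, 0 < b →
      δ * Real.sqrt (F (1 / δ ^ 2)) ≤ ‖φ b‖ / ‖ψ b‖ + Nb φ ψ b * δ := by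
    intro b hb
    calc δ * Real.sqrt (F (1 / δ ^ 2))
        ≤ δ * (‖φ b‖ / ‖ψ b‖ * (1 / δ) + Nb φ ψ b) := by
          rw [hsqrt, ← hψt₀]
          gcongr
          exact norm_le_mul_add_Nb hφc hψc hratio hb ht₀ hψt₀_ne
      _ = ‖φ b‖ / ‖ψ b‖ + Nb φ ψ b * δ := by field_simp
  have : Nonempty {b : ℝ // 0 < b} := ⟨⟨1, one_pos⟩⟩
  exact ⟨hbound, le_ciInf fun b => hbound b.1 b.2⟩

/-- If `ψ(0) = 0`, `|ψ(t)| → +∞` as `t → +∞`, and `|φ(t)|² = F(|ψ(t)|²)`, then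
for every `δ > 0` and every `b > 0`,
`δ·√(F(1/δ²)) ≤ |φ(b)|/|ψ(b)| + N(b)·δ`; consequently
`δ·√(F(1/δ²)) ≤ inf_{b > 0} (|φ(b)|/|ψ(b)| + N(b)·δ)`. -/
theorem modulus_lower_bnd_le_l_delta
    (φ ψ : ℝ → ℂ) (hφc : Continuous φ) (hψc : Continuous ψ)
    (hφe : ∀ t : ℝ, φ (-t) = φ t) (hψe : ∀ t : ℝ, ψ (-t) = ψ t)
    (hφm : StrictMonoOn (fun t => ‖φ t‖) (Set.Ioi (0 : ℝ)))
    (hψm : StrictMonoOn (fun t => ‖ψ t‖) (Set.Ioi (0 : ℝ)))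
    (hratio : AntitoneOn (fun t => ‖φ t‖ / ‖ψ t‖) (Set.Ioi (0 : ℝ)))
    (hψ0 : ψ 0 = 0)
    (hψtop : Filter.Tendsto (fun t => ‖ψ t‖) Filter.atTop Filter.atTop)
    (F : ℝ → ℝ) (hFφψ : ∀ t : ℝ, ‖φ t‖ ^ 2 = F (‖ψ t‖ ^ 2)) :
    ∀ δ : ℝ, 0 < δ →
      (∀ b : ℝ, 0 < b →
        δ * Real.sqrt (F (1 / δ ^ 2)) ≤ ‖φ b‖ / ‖ψ b‖ + Nb φ ψ b * δ) ∧
      δ * Real.sqrt (F (1 / δ ^ 2))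
        ≤ ⨅ b : {b : ℝ // 0 < b}, (‖φ (b : ℝ)‖ / ‖ψ (b : ℝ)‖ + Nb φ ψ (b : ℝ) * δ) :=
  modulus_lower_bnd_le_l_delta_general φ ψ hφc hψc hratio hψ0 hψtop F hFφψ
end

section
/- Let r ≥ 2 be a natural number and let 1 ≤ k ≤ r − 1. Let f : ℝ → ℂ be r-times continuously differentiable and suppose both f and its r-th derivative f^{(r)} belong to L²(ℝ). Then the k-th derivative f^{(k)} belongs to L²(ℝ) and ‖f^{(k)}‖_{L²(ℝ)} ≤ ‖f‖_{L²(ℝ)}^{1 − k/r} · ‖f^{(r)}‖_{L²(ℝ)}^{k/r}. -/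
/-!
Integrating by parts, `‖g'‖₂² = -⟪g'', g⟫ ≤ ‖g‖₂ ‖g''‖₂` whenever `g, g', g'' ∈ L²`. Applied to
`g = f⁽ʲ⁾` this makes `j ↦ ‖f⁽ʲ⁾‖₂` log-convex on `{0, …, r}`, which is the inequality.

The integration by parts needs every `f⁽ʲ⁾` in `L²` beforehand. Solving a Vandermonde system for
weights `w` with `∑ᵢ wᵢ iᵐ = δₘⱼ` (`m < r`), Taylor's formula writes `f⁽ʲ⁾(x) / j!` as
`∑ᵢ wᵢ f(x + i)` plus remainders bounded by `∫_{[x, x + r - 1]} ‖f⁽ʳ⁾‖`, and such sliding-window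
integrals of an `L²` function are again in `L²`.
-/

open MeasureTheory
open Set intervalIntegral
open scoped ENNReal Nat RealInnerProductSpace

theorem exists_sum_mul_pow_eq {K : Type*} [Field K] {r : ℕ} {t : Fin r → K}
    (ht : Function.Injective t) (e : ℕ → K) :
    ∃ w : Fin r → K, ∀ m < r, ∑ i, w i * t i ^ m = e m := by
  have hV : IsUnit (Matrix.vandermonde t) :=
    (Matrix.isUnit_iff_isUnit_det _).mpr
      (isUnit_iff_ne_zero.mpr (Matrix.det_vandermonde_ne_zero_iff.mpr ht))
  obtain ⟨w, hw⟩ := Matrix.vecMul_surjective_iff_isUnit.mpr hV fun m : Fin r => e m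
  exact ⟨w, fun m hm => by simpa [Matrix.vecMul, dotProduct] using congrFun hw ⟨m, hm⟩⟩

section

variable {E : Type*} [NormedAddCommGroup E]

theorem enorm_integral_norm_rpow_two_le {α : Type*} [MeasurableSpace α] {μ : Measure α} {g : α → E}
    (hg : AEStronglyMeasurable g μ) :
    ‖∫ a, ‖g a‖ ∂μ‖ₑ ^ (2 : ℝ) ≤ μ univ * ∫⁻ a, ‖g a‖ₑ ^ (2 : ℝ) ∂μ := by
  rw [← ENNReal.le_rpow_inv_iff two_pos, ENNReal.mul_rpow_of_nonneg _ _ (by norm_num)]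
  calc ‖∫ a, ‖g a‖ ∂μ‖ₑ ≤ eLpNorm g 1 μ := by
        simpa [eLpNorm_one_eq_lintegral_enorm] using
          enorm_integral_le_lintegral_enorm (fun a => ‖g a‖)
    _ ≤ eLpNorm g 2 μ * μ univ ^ (1 / 1 - 1 / 2 : ℝ) := by
        simpa using eLpNorm_le_eLpNorm_mul_rpow_measure_univ one_le_two hg
    _ = _ := by
        rw [eLpNorm_eq_lintegral_rpow_enorm_toReal two_ne_zero ENNReal.ofNat_ne_top, mul_comm]
        norm_num

theorem memLp_two_integral_Icc_norm_comp_add {g : ℝ → E} (hg : Continuous g)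
    (h2 : MemLp g 2 volume) (c : ℝ) :
    MemLp (fun x => ∫ s in Icc 0 c, ‖g (x + s)‖) 2 volume := by
  refine ⟨(continuous_parametric_integral_of_continuous (by fun_prop)
    isCompact_Icc).aestronglyMeasurable, ?_⟩
  rw [eLpNorm_lt_top_iff_lintegral_rpow_enorm_lt_top two_ne_zero ENNReal.ofNat_ne_top]
  have hg2 := lintegral_rpow_enorm_lt_top_of_eLpNorm_lt_top two_ne_zero ENNReal.ofNat_ne_top h2.2
  simp only [ENNReal.toReal_ofNat] at hg2 ⊢
  have hswap : ∫⁻ x, ∫⁻ s in Icc 0 c, ‖g (x + s)‖ₑ ^ (2 : ℝ)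
      = volume (Icc 0 c) * ∫⁻ x, ‖g x‖ₑ ^ (2 : ℝ) := by
    rw [lintegral_lintegral_swap (by fun_prop)]
    simp_rw [lintegral_add_right_eq_self (fun x => ‖g x‖ₑ ^ (2 : ℝ))]
    rw [setLIntegral_const, mul_comm]
  calc ∫⁻ x, ‖∫ s in Icc 0 c, ‖g (x + s)‖‖ₑ ^ (2 : ℝ)
      ≤ ∫⁻ x, volume (Icc 0 c) * ∫⁻ s in Icc 0 c, ‖g (x + s)‖ₑ ^ (2 : ℝ) := by
        refine lintegral_mono fun x => ?_
        simpa using enorm_integral_norm_rpow_two_le (μ := volume.restrict (Icc 0 c))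
          (hg.comp (continuous_const_add x)).aestronglyMeasurable
    _ < ∞ := by
        rw [lintegral_const_mul' _ _ measure_Icc_lt_top.ne, hswap]
        exact ENNReal.mul_lt_top measure_Icc_lt_top (ENNReal.mul_lt_top measure_Icc_lt_top hg2)

variable [NormedSpace ℝ E]

theorem norm_integral_taylor_remainder_le {g : ℝ → E} (hg : Continuous g) (n : ℕ) {h c : ℝ}
    (h0 : 0 ≤ h) (hc : h ≤ c) (x : ℝ) :
    ‖∫ s in 0..h, ((h - s) ^ n / n !) • g (x + s)‖ ≤ c ^ n * ∫ s in Icc 0 c, ‖g (x + s)‖ := by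
  have hgx : Continuous fun s => g (x + s) := hg.comp (continuous_const_add x)
  calc ‖∫ s in 0..h, ((h - s) ^ n / n !) • g (x + s)‖
      ≤ ∫ s in 0..h, ‖((h - s) ^ n / n !) • g (x + s)‖ := norm_integral_le_integral_norm h0
    _ ≤ ∫ s in 0..h, c ^ n * ‖g (x + s)‖ := by
      refine integral_mono_on h0 (Continuous.intervalIntegrable (by fun_prop) _ _)
        (Continuous.intervalIntegrable (by fun_prop) _ _) fun s hs => ?_
      rw [norm_smul, Real.norm_of_nonneg (by have := hs.2; positivity)]
      gcongr
      calc (h - s) ^ n / n ! ≤ (h - s) ^ n :=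
            div_le_self (by have := hs.2; positivity) (mod_cast n.factorial_pos)
        _ ≤ c ^ n := by gcongr <;> linarith [hs.1, hs.2]
    _ = c ^ n * ∫ s in Ioc 0 h, ‖g (x + s)‖ := by
      rw [intervalIntegral.integral_const_mul, integral_of_le h0]
    _ ≤ c ^ n * ∫ s in Icc 0 c, ‖g (x + s)‖ := by
      refine mul_le_mul_of_nonneg_left ?_ (pow_nonneg (h0.trans hc) n)
      exact setIntegral_mono_set (hgx.norm.integrableOn_Icc) (ae_of_all _ fun _ => norm_nonneg _)
        (Ioc_subset_Icc_self.trans (Icc_subset_Icc le_rfl hc)).eventuallyLE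

theorem ContDiff.hasDerivAt_iteratedDeriv {f : ℝ → E} {r : ℕ} (hf : ContDiff ℝ r f) {j : ℕ}
    (hj : j < r) (x : ℝ) :
    HasDerivAt (iteratedDeriv j f) (iteratedDeriv (j + 1) f x) x := by
  simpa [iteratedDeriv_succ] using
    (hf.differentiable_iteratedDeriv j (by exact_mod_cast hj) x).hasDerivAt

variable [CompleteSpace E]

theorem taylor_integral_remainder_iteratedDeriv {f : ℝ → E} {n : ℕ}
    (hf : ContDiff ℝ (n + 1 : ℕ) f) (x h : ℝ) :
    f (x + h) = ∑ m ∈ Finset.range (n + 1), (h ^ m / m !) • iteratedDeriv m f x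
      + ∫ s in 0..h, ((h - s) ^ n / n !) • iteratedDeriv (n + 1) f (x + s) := by
  rcases eq_or_ne h 0 with rfl | hh
  · simp [Finset.sum_range_succ']
  have hs : UniqueDiffOn ℝ (uIcc x (x + h)) := uniqueDiffOn_uIcc (by simpa using hh)
  have hderiv : ∀ m ≤ n + 1, ∀ y ∈ uIcc x (x + h),
      iteratedDerivWithin m f (uIcc x (x + h)) y = iteratedDeriv m f y := fun m hm y hy =>
    iteratedDerivWithin_eq_iteratedDeriv hs ((hf.of_le (by exact_mod_cast hm)).contDiffAt) hy
  have htaylor := taylor_integral_remainder (x₀ := x) (x := x + h) hf.contDiffOn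
  have hshift : (∫ s in 0..h, ((h - s) ^ n / n !) • iteratedDeriv (n + 1) f (x + s))
      = ∫ t in x..x + h, ((x + h - t) ^ n / n !) • iteratedDeriv (n + 1) f t := by
    simpa using intervalIntegral.integral_comp_add_left
      (fun t => ((x + h - t) ^ n / n !) • iteratedDeriv (n + 1) f t) x (a := 0) (b := h)
  rw [taylor_within_apply, intervalIntegral.integral_congr
    (g := fun t => ((x + h - t) ^ n / n !) • iteratedDeriv (n + 1) f t)
    fun y hy => by simp only [hderiv _ le_rfl y hy]] at htaylor
  rw [hshift, ← sub_eq_iff_eq_add', ← htaylor]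
  simp only [add_sub_cancel_left]
  congr 1
  refine Finset.sum_congr rfl fun m hm => ?_
  rw [hderiv m (by simp at hm; omega) x left_mem_uIcc, div_eq_inv_mul]

theorem iteratedDeriv_eq_smul_sum_sub_taylor_remainder {f : ℝ → E} {n j : ℕ}
    (hf : ContDiff ℝ (n + 1 : ℕ) f) {t w : Fin (n + 1) → ℝ}
    (hw : ∀ m < n + 1, ∑ i, w i * t i ^ m = if m = j then 1 else 0) (hj : j ≤ n) (x : ℝ) :
    iteratedDeriv j f x = (j ! : ℝ) • ∑ i, w i • (f (x + t i) -
      ∫ s in 0..t i, ((t i - s) ^ n / n !) • iteratedDeriv (n + 1) f (x + s)) := by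
  have hsum : ∑ i, w i • (f (x + t i) -
      ∫ s in 0..t i, ((t i - s) ^ n / n !) • iteratedDeriv (n + 1) f (x + s))
      = (j ! : ℝ)⁻¹ • iteratedDeriv j f x := by
    simp_rw [taylor_integral_remainder_iteratedDeriv hf x, add_sub_cancel_right, Finset.smul_sum,
      smul_smul]
    rw [Finset.sum_comm]
    calc ∑ m ∈ Finset.range (n + 1), ∑ i, (w i * (t i ^ m / m !)) • iteratedDeriv m f x
        = ∑ m ∈ Finset.range (n + 1), if m = j then (j ! : ℝ)⁻¹ • iteratedDeriv j f x else 0 := by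
          refine Finset.sum_congr rfl fun m hm => ?_
          simp_rw [← Finset.sum_smul, mul_div_assoc', ← Finset.sum_div,
            hw m (Finset.mem_range.mp hm)]
          split_ifs with hmj <;> simp [hmj]
      _ = (j ! : ℝ)⁻¹ • iteratedDeriv j f x := by simp [Finset.mem_range, Nat.lt_succ_of_le hj]
  rw [hsum, smul_smul, mul_inv_cancel₀ (by positivity), one_smul]

theorem memLp_two_iteratedDeriv {f : ℝ → E} {r : ℕ} (hf : ContDiff ℝ r f)
    (h0 : MemLp f 2 volume) (hr : MemLp (iteratedDeriv r f) 2 volume) {j : ℕ} (hj : j ≤ r) :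
    MemLp (iteratedDeriv j f) 2 volume := by
  rcases hj.eq_or_lt with rfl | hjr
  · exact hr
  obtain ⟨n, rfl⟩ : ∃ n, r = n + 1 := ⟨r - 1, by omega⟩
  have hnodes : Function.Injective fun i : Fin (n + 1) => (i : ℝ) :=
    Nat.cast_injective.comp Fin.val_injective
  obtain ⟨w, hw⟩ := exists_sum_mul_pow_eq hnodes fun m => if m = j then 1 else 0
  have hDr : Continuous (iteratedDeriv (n + 1) f) := hf.continuous_iteratedDeriv _ le_rfl
  set W := fun x => ∫ s in Icc 0 (n : ℝ), ‖iteratedDeriv (n + 1) f (x + s)‖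
  have hbound : ∀ x, ‖iteratedDeriv j f x‖
      ≤ j ! * ∑ i : Fin (n + 1), |w i| * (‖f (x + i)‖ + (n : ℝ) ^ n * W x) := by
    intro x
    rw [iteratedDeriv_eq_smul_sum_sub_taylor_remainder hf hw (by omega) x, norm_smul,
      Real.norm_natCast]
    gcongr
    refine (norm_sum_le _ _).trans (Finset.sum_le_sum fun i _ => ?_)
    rw [norm_smul, Real.norm_eq_abs]
    gcongr
    exact (norm_sub_le _ _).trans (add_le_add le_rfl (norm_integral_taylor_remainder_le hDr n
      (h := (i : ℕ)) (c := n) (Nat.cast_nonneg _) (by exact_mod_cast i.is_le) x))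
  have hmajorant : MemLp (fun x => j ! * ∑ i : Fin (n + 1),
      |w i| * (‖f (x + i)‖ + (n : ℝ) ^ n * W x)) 2 volume := by
    have htrans (i : Fin (n + 1)) : MemLp (fun x => ‖f (x + i)‖) 2 volume :=
      (h0.comp_measurePreserving (measurePreserving_add_right volume (i : ℝ))).norm
    have hW : MemLp W 2 volume := memLp_two_integral_Icc_norm_comp_add hDr hr n
    exact (memLp_finsetSum _ fun i _ => ((htrans i).add (hW.const_mul _)).const_mul _).const_mul _
  exact hmajorant.of_le
    (hf.continuous_iteratedDeriv j (by exact_mod_cast hjr.le)).aestronglyMeasurable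
    (ae_of_all _ fun x => (hbound x).trans (le_abs_self _))

end

section InnerProduct

variable {α F : Type*} [MeasurableSpace α] {μ : Measure α} [NormedAddCommGroup F]
  [InnerProductSpace ℝ F] {u v : α → F}

theorem inner_toLp_eq_integral_inner (hu : MemLp u 2 μ) (hv : MemLp v 2 μ) :
    ⟪hu.toLp u, hv.toLp v⟫ = ∫ a, ⟪u a, v a⟫ ∂μ := by
  rw [L2.inner_def]
  refine integral_congr_ae ?_
  filter_upwards [hu.coeFn_toLp, hv.coeFn_toLp] with a hua hva
  rw [hua, hva]

theorem integrable_inner_of_memLp_two (hu : MemLp u 2 μ) (hv : MemLp v 2 μ) :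
    Integrable (fun a => ⟪u a, v a⟫) μ := by
  refine (L2.integrable_inner (hu.toLp u) (hv.toLp v)).congr ?_
  filter_upwards [hu.coeFn_toLp, hv.coeFn_toLp] with a hua hva
  rw [hua, hva]

theorem sq_eLpNorm_deriv_le_mul {g g' g'' : ℝ → F} (hg : ∀ x, HasDerivAt g (g' x) x)
    (hg' : ∀ x, HasDerivAt g' (g'' x) x) (h0 : MemLp g 2 volume) (h1 : MemLp g' 2 volume)
    (h2 : MemLp g'' 2 volume) :
    eLpNorm g' 2 volume ^ 2 ≤ eLpNorm g 2 volume * eLpNorm g'' 2 volume := by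
  have hibp : ∫ x, ⟪g' x, g' x⟫ = -∫ x, ⟪g'' x, g x⟫ :=
    integral_bilinear_hasDerivAt_right_eq_neg_left_of_integrable (L := innerSL ℝ)
      (fun x _ => hg' x) (fun x _ => hg x) (integrable_inner_of_memLp_two h1 h1)
      (integrable_inner_of_memLp_two h2 h0) (integrable_inner_of_memLp_two h1 h0)
  have hL2 : ‖h1.toLp g'‖ ^ 2 ≤ ‖h0.toLp g‖ * ‖h2.toLp g''‖ := by
    rw [← real_inner_self_eq_norm_sq, inner_toLp_eq_integral_inner, hibp,
      ← inner_toLp_eq_integral_inner h2 h0, mul_comm]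
    exact (neg_le_abs _).trans (abs_real_inner_le_norm _ _)
  rw [← ENNReal.toReal_le_toReal (by simp [h1.eLpNorm_ne_top])
    (ENNReal.mul_ne_top h0.eLpNorm_ne_top h2.eLpNorm_ne_top), ENNReal.toReal_pow,
    ENNReal.toReal_mul]
  simpa only [Lp.norm_toLp] using hL2

end InnerProduct

theorem pow_le_pow_mul_pow_of_sq_le_mul {N : ℕ → ℝ≥0∞} {r : ℕ} (hfin : ∀ j ≤ r, N j ≠ ∞)
    (hN : ∀ j, j + 2 ≤ r → N (j + 1) ^ 2 ≤ N j * N (j + 2)) {k : ℕ} (hk : k ≤ r) :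
    N k ^ r ≤ N 0 ^ (r - k) * N r ^ k := by
  induction r generalizing k with
  | zero =>
    obtain rfl : k = 0 := by omega
    simp
  | succ r ih =>
    have ih' {k : ℕ} (hk : k ≤ r) : N k ^ r ≤ N 0 ^ (r - k) * N r ^ k :=
      ih (fun j hj => hfin j (by omega)) (fun j hj => hN j (by omega)) hk
    rcases hk.eq_or_lt with rfl | hk
    · simp
    rcases Nat.eq_zero_or_pos r with rfl | hr
    · obtain rfl : k = 0 := by omega
      simp
    have hlast : N r ^ (r + 1) ≤ N 0 * N (r + 1) ^ r := by
      obtain ⟨s, rfl⟩ : ∃ s, r = s + 1 := ⟨r - 1, by omega⟩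
      rcases eq_or_ne (N (s + 1)) 0 with h0 | h0
      · simp [h0]
      have h1 := ih' (k := s) (by omega)
      rw [Nat.add_sub_cancel_left, pow_one] at h1
      refine (ENNReal.mul_le_mul_iff_left (pow_ne_zero s h0)
        (ENNReal.pow_ne_top (hfin (s + 1) (by omega)))).mp ?_
      calc N (s + 1) ^ (s + 1 + 1) * N (s + 1) ^ s = (N (s + 1) ^ 2) ^ (s + 1) := by ring
        _ ≤ (N s * N (s + 2)) ^ (s + 1) := by gcongr; exact hN s (by omega)
        _ = N s ^ (s + 1) * N (s + 2) ^ (s + 1) := mul_pow _ _ _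
        _ ≤ N 0 * N (s + 1) ^ s * N (s + 2) ^ (s + 1) := by gcongr
        _ = N 0 * N (s + 1 + 1) ^ (s + 1) * N (s + 1) ^ s := by ring
    have h := ih' (k := k) (by omega)
    obtain ⟨m, rfl⟩ : ∃ m, r = k + m := ⟨r - k, by omega⟩
    rw [show k + m + 1 - k = m + 1 by omega]
    rw [Nat.add_sub_cancel_left] at h
    refine (ENNReal.pow_le_pow_left_iff hr.ne').mp ?_
    calc (N k ^ (k + m + 1)) ^ (k + m) = (N k ^ (k + m)) ^ (k + m + 1) := by ring
      _ ≤ (N 0 ^ m * N (k + m) ^ k) ^ (k + m + 1) := by gcongr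
      _ = N 0 ^ (m * (k + m + 1)) * (N (k + m) ^ (k + m + 1)) ^ k := by ring
      _ ≤ N 0 ^ (m * (k + m + 1)) * (N 0 * N (k + m + 1) ^ (k + m)) ^ k := by gcongr
      _ = (N 0 ^ (m + 1) * N (k + m + 1) ^ k) ^ (k + m) := by ring

theorem le_rpow_mul_rpow_of_sq_le_mul {N : ℕ → ℝ≥0∞} {r : ℕ} (hfin : ∀ j ≤ r, N j ≠ ∞)
    (hN : ∀ j, j + 2 ≤ r → N (j + 1) ^ 2 ≤ N j * N (j + 2)) {k : ℕ} (hk : k ≤ r) :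
    N k ≤ N 0 ^ (1 - (k : ℝ) / r) * N r ^ ((k : ℝ) / r) := by
  rcases Nat.eq_zero_or_pos r with rfl | hr
  · obtain rfl : k = 0 := by omega
    simp
  have hr' : (r : ℝ) ≠ 0 := by positivity
  calc N k = (N k ^ r) ^ (r : ℝ)⁻¹ := by
        rw [← ENNReal.rpow_natCast, ← ENNReal.rpow_mul, mul_inv_cancel₀ hr', ENNReal.rpow_one]
    _ ≤ (N 0 ^ (r - k) * N r ^ k) ^ (r : ℝ)⁻¹ :=
        ENNReal.rpow_le_rpow (pow_le_pow_mul_pow_of_sq_le_mul hfin hN hk) (by positivity)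
    _ = N 0 ^ (1 - (k : ℝ) / r) * N r ^ ((k : ℝ) / r) := by
        rw [ENNReal.mul_rpow_of_nonneg _ _ (by positivity), ← ENNReal.rpow_natCast,
          ← ENNReal.rpow_natCast, ← ENNReal.rpow_mul, ← ENNReal.rpow_mul, Nat.cast_sub hk]
        congr 2
        field_simp

theorem hardy_littlewood_polya_general
    (r k : ℕ) (hkr : k ≤ r - 1)
    (f : ℝ → ℂ) (hf : ContDiff ℝ (r : ℕ∞) f)
    (hf2 : MemLp f 2 (volume : Measure ℝ))
    (hfr2 : MemLp (iteratedDeriv r f) 2 (volume : Measure ℝ)) :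
    MemLp (iteratedDeriv k f) 2 (volume : Measure ℝ) ∧
    eLpNorm (iteratedDeriv k f) 2 (volume : Measure ℝ)
      ≤ eLpNorm f 2 (volume : Measure ℝ) ^ (1 - (k : ℝ) / r)
        * eLpNorm (iteratedDeriv r f) 2 (volume : Measure ℝ) ^ ((k : ℝ) / r) := by
  have hmem {j : ℕ} (hj : j ≤ r) : MemLp (iteratedDeriv j f) 2 volume :=
    memLp_two_iteratedDeriv hf hf2 hfr2 hj
  refine ⟨hmem (by omega), ?_⟩
  simpa using le_rpow_mul_rpow_of_sq_le_mul (N := fun j => eLpNorm (iteratedDeriv j f) 2 volume)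
    (fun j hj => (hmem hj).eLpNorm_ne_top)
    (fun j hj => sq_eLpNorm_deriv_le_mul (hf.hasDerivAt_iteratedDeriv (by omega))
      (hf.hasDerivAt_iteratedDeriv (by omega)) (hmem (by omega)) (hmem (by omega))
      (hmem (by omega)))
    (by omega : k ≤ r)

/-- **Classical Hardy–Littlewood–Pólya inequality.** If `f : ℝ → ℂ` is `r`-times
continuously differentiable with `f, f⁽ʳ⁾ ∈ L²(ℝ)`, then for `1 ≤ k ≤ r − 1`
the derivative `f⁽ᵏ⁾` belongs to `L²(ℝ)` and
`‖f⁽ᵏ⁾‖₂ ≤ ‖f‖₂^{1 − k/r} · ‖f⁽ʳ⁾‖₂^{k/r}`. -/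
theorem hardy_littlewood_polya
    (r k : ℕ) (hr : 2 ≤ r) (hk1 : 1 ≤ k) (hkr : k ≤ r - 1)
    (f : ℝ → ℂ) (hf : ContDiff ℝ (r : ℕ∞) f)
    (hf2 : MemLp f 2 (volume : Measure ℝ))
    (hfr2 : MemLp (iteratedDeriv r f) 2 (volume : Measure ℝ)) :
    MemLp (iteratedDeriv k f) 2 (volume : Measure ℝ) ∧
    eLpNorm (iteratedDeriv k f) 2 (volume : Measure ℝ)
      ≤ eLpNorm f 2 (volume : Measure ℝ) ^ (1 - (k : ℝ) / r)
        * eLpNorm (iteratedDeriv r f) 2 (volume : Measure ℝ) ^ ((k : ℝ) / r) :=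
  hardy_littlewood_polya_general r k hkr f hf hf2 hfr2
end
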